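/- arXiv:1207.0092 — 2 statements merged into one kernel-verified Lean document; each statement's English description precedes it below -/
import Mathlib

section
/- Let (Aₙ) be a sequence of subsets of ℝ², each of which is either empty or compact, convex, and of positive Lebesgue measure. Suppose (Aₙ) is Cauchy for d, i.e., for every ε > 0 there exists N such that λ(A_m Δ A_n) < ε for all m, n ≥ N. Then there exists a set A ⊆ ℝ², either empty or compact, convex, and of positive Lebesgue measure, such that λ(Aₙ Δ A) → 0 as n → ∞. (The space Ĉ of compact convex subsets of ℝ² of positive measure together with ∅, equipped with d, is a complete metric space.) -/
/-!
Pass to a subsequence `A ∘ φ` along which consecutive distances are summable. Its liminf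
`⋃ k, ⋂ j ≥ k, A (φ j)` is then a limit of the whole sequence (each point off the tail union of
consecutive symmetric differences lies in all or none of the tail sets), and it is convex, being
an increasing union of intersections of convex sets. Replacing it by its closure changes it only
by part of the frontier, a null set. If the limit is null, `∅` is also a limit; otherwise it is a
closed convex set of positive and (as a limit of sets of finite measure) finite measure, hence
bounded: a convex set containing a ball `B(x, r)` and a point at distance `≥ 2kr` from `x`
contains `k` disjoint balls of radius `r / 2` along the segment between them.
-/

open MeasureTheory Set Metric Filter

noncomputable section

abbrev Plane := EuclideanSpace ℝ (Fin 2)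

/-- Membership in $\hat{\mathcal C}$: the empty set, or a compact convex set of positive
Lebesgue measure. -/
def InChat (A : Set Plane) : Prop :=
  A = ∅ ∨ (IsCompact A ∧ Convex ℝ A ∧ 0 < volume A)

open scoped symmDiff Pointwise

section Liminf

variable {α : Type*}

theorem symmDiff_liminf_subset (A : ℕ → Set α) (k : ℕ) :
    A k ∆ liminf A atTop ⊆ ⋃ j, A (j + k) ∆ A (j + k + 1) := by
  intro x hx
  by_contra hx'
  simp only [mem_iUnion, mem_symmDiff, not_exists] at hx'
  have hstable : ∀ n ≥ k, (x ∈ A n ↔ x ∈ A k) := by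
    intro n hn
    induction n, hn using Nat.le_induction with
    | base => rfl
    | succ n hkn ih =>
      have := hx' (n - k)
      rw [Nat.sub_add_cancel hkn] at this
      tauto
  have hmem : x ∈ liminf A atTop ↔ x ∈ A k := by
    rw [mem_liminf_iff_eventually_mem, eventually_congr ((eventually_ge_atTop k).mono hstable),
      eventually_const]
  rw [mem_symmDiff, hmem] at hx
  tauto

variable [MeasurableSpace α] (μ : Measure α)

theorem tendsto_measure_symmDiff_liminf {A : ℕ → Set α}
    (hA : ∑' k, μ (A k ∆ A (k + 1)) ≠ ⊤) :
    Tendsto (fun k => μ (A k ∆ liminf A atTop)) atTop (nhds 0) :=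
  tendsto_of_tendsto_of_tendsto_of_le_of_le tendsto_const_nhds
    (ENNReal.tendsto_sum_nat_add _ hA) (fun _ => zero_le)
    fun k => (measure_mono (symmDiff_liminf_subset A k)).trans (measure_iUnion_le _)

theorem exists_tendsto_measure_symmDiff_liminf_comp {A : ℕ → Set α}
    (hA : ∀ ε : ℝ, 0 < ε → ∃ N : ℕ, ∀ m n : ℕ, N ≤ m → N ≤ n →
      μ (A m ∆ A n) < ENNReal.ofReal ε) :
    ∃ φ : ℕ → ℕ, Tendsto (fun n => μ (A n ∆ liminf (A ∘ φ) atTop)) atTop (nhds 0) := by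
  have hgeom : ∀ k : ℕ, ENNReal.ofReal ((2⁻¹ : ℝ) ^ k) = 2⁻¹ ^ k := fun k => by
    rw [ENNReal.ofReal_pow (by norm_num), ENNReal.ofReal_inv_of_pos two_pos, ENNReal.ofReal_ofNat]
  obtain ⟨φ, hφ, hφA⟩ : ∃ φ : ℕ → ℕ, StrictMono φ ∧
      ∀ k, ∀ n ≥ φ k, μ (A n ∆ A (φ k)) < 2⁻¹ ^ k := by
    refine extraction_forall_of_eventually' (P := fun k n => ∀ m ≥ n, μ (A m ∆ A n) < 2⁻¹ ^ k)
      fun k => ?_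
    obtain ⟨N, hN⟩ := hA _ (pow_pos (inv_pos.2 two_pos) k)
    exact ⟨N, fun n hn m hm => hgeom k ▸ hN m n (hn.trans hm) hn⟩
  have hsum : ∑' k, μ ((A ∘ φ) k ∆ (A ∘ φ) (k + 1)) ≠ ⊤ := by
    refine ne_top_of_le_ne_top (ENNReal.tsum_geometric_two ▸ ENNReal.ofNat_ne_top)
      (ENNReal.tsum_le_tsum fun k => ?_)
    rw [Function.comp_apply, Function.comp_apply, symmDiff_comm]
    exact (hφA k _ (hφ.monotone k.le_succ)).le
  set L := liminf (A ∘ φ) atTop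
  refine ⟨φ, ENNReal.tendsto_nhds_zero.2 fun δ hδ => ?_⟩
  have hδ₂ : 0 < δ / 2 := ENNReal.half_pos hδ.ne'
  obtain ⟨k, hk_geom, hk_L⟩ := ((ENNReal.tendsto_pow_atTop_nhds_zero_of_lt_one
    (by norm_num : (2⁻¹ : ENNReal) < 1)).eventually (gt_mem_nhds hδ₂) |>.and
    ((tendsto_measure_symmDiff_liminf μ hsum).eventually (gt_mem_nhds hδ₂))).exists
  filter_upwards [eventually_ge_atTop (φ k)] with n hn
  calc μ (A n ∆ L) ≤ μ (A n ∆ A (φ k)) + μ (A (φ k) ∆ L) := measure_symmDiff_le _ _ _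
    _ ≤ δ / 2 + δ / 2 := add_le_add ((hφA k n hn).trans hk_geom).le hk_L.le
    _ = δ := ENNReal.add_halves δ

end Liminf

theorem Convex.liminf {𝕜 E ι : Type*} [Semiring 𝕜] [PartialOrder 𝕜] [AddCommMonoid E]
    [Module 𝕜 E] {A : ι → Set E} {l : Filter ι} (hA : ∀ i, Convex 𝕜 (A i)) :
    Convex 𝕜 (liminf A l) := by
  intro x hx y hy a b ha hb hab
  rw [mem_liminf_iff_eventually_mem] at hx hy ⊢
  filter_upwards [hx, hy] with i hxi hyi using hA i hxi hyi ha hb hab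

section ConvexGeometry

variable {E : Type*} [NormedAddCommGroup E] [NormedSpace ℝ E] {s : Set E} {x y : E} {r : ℝ}

theorem Convex.ball_lineMap_subset (hs : Convex ℝ s) (hball : ball x r ⊆ s) (hy : y ∈ s)
    {t : ℝ} (ht₀ : 0 ≤ t) (ht₁ : t < 1) :
    ball (AffineMap.lineMap x y t) ((1 - t) * r) ⊆ s := by
  have ht : 0 < 1 - t := sub_pos.2 ht₁
  calc ball (AffineMap.lineMap x y t) ((1 - t) * r)
      = {t • y} + (1 - t) • ball x r := by
        rw [_root_.smul_ball ht.ne', singleton_add_ball, Real.norm_of_nonneg ht.le,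
          AffineMap.lineMap_apply_module, add_comm]
    _ ⊆ t • s + (1 - t) • s :=
        add_subset_add (singleton_subset_iff.2 (smul_mem_smul_set hy)) (smul_set_mono hball)
    _ ⊆ s := convex_iff_pointwise_add_subset.1 hs ht₀ ht.le (by ring)

variable [MeasurableSpace E] [BorelSpace E] (μ : Measure E) [μ.IsAddHaarMeasure]

theorem Convex.natCast_mul_measure_ball_le (hs : Convex ℝ s) (hr : 0 < r) (hball : ball x r ⊆ s)
    (hy : y ∈ s) {k : ℕ} (hk : 2 * k * r ≤ dist x y) :
    k * μ (ball x (r / 2)) ≤ μ s := by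
  rcases k.eq_zero_or_pos with rfl | hk₀
  · simp
  have hD : 0 < dist x y := lt_of_lt_of_le (by positivity) hk
  set c : ℕ → E := fun i => AffineMap.lineMap x y (i * r / dist x y)
  have hsub : ∀ i ∈ Finset.range k, ball (c i) (r / 2) ⊆ s := by
    intro i hi
    have hik : (i : ℝ) ≤ k := by exact_mod_cast (Finset.mem_range.1 hi).le
    have ht : i * r / dist x y ≤ 1 / 2 := by
      rw [div_le_iff₀ hD]
      nlinarith
    refine (ball_subset_ball ?_).trans (hs.ball_lineMap_subset hball hy (by positivity) ?_)
    · nlinarith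
    · linarith
  have hdisj : (Finset.range k : Set ℕ).PairwiseDisjoint fun i => ball (c i) (r / 2) := by
    intro i _ j _ hij
    refine ball_disjoint_ball ?_
    have hij' : (1 : ℝ) ≤ |(i : ℝ) - j| := by
      exact_mod_cast Int.one_le_abs (sub_ne_zero.2 (Int.ofNat_inj.not.2 hij))
    rw [dist_lineMap_lineMap, Real.dist_eq, ← sub_div, ← sub_mul, abs_div, abs_mul,
      abs_of_pos hD, abs_of_pos hr, div_mul_cancel₀ _ hD.ne']
    nlinarith
  calc k * μ (ball x (r / 2)) = ∑ i ∈ Finset.range k, μ (ball (c i) (r / 2)) := by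
        simp [Measure.addHaar_ball_center μ _ (r / 2)]
    _ = μ (⋃ i ∈ Finset.range k, ball (c i) (r / 2)) :=
        (measure_biUnion_finset hdisj fun _ _ => measurableSet_ball).symm
    _ ≤ μ s := measure_mono (iUnion₂_subset hsub)

variable [FiniteDimensional ℝ E]

theorem Convex.isBounded_of_measure_ne_top (hs : Convex ℝ s) (h₀ : μ s ≠ 0) (hfin : μ s ≠ ⊤) :
    Bornology.IsBounded s := by
  obtain ⟨x, hx⟩ : (interior s).Nonempty := by
    refine hs.interior_nonempty_iff_affineSpan_eq_top.2 (by_contra fun h => h₀ ?_)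
    exact measure_mono_null (subset_affineSpan ℝ s) (Measure.addHaar_affineSubspace μ _ h)
  obtain ⟨r, hr, hball⟩ := isOpen_iff.1 isOpen_interior x hx
  have hv : μ (ball x (r / 2)) ≠ 0 := (measure_ball_pos μ x (half_pos hr)).ne'
  obtain ⟨k, hk⟩ := ENNReal.exists_nat_gt (ENNReal.div_lt_top hfin hv).ne
  rw [ENNReal.div_lt_iff (Or.inl hv) (Or.inl measure_ball_lt_top.ne)] at hk
  refine (isBounded_iff_subset_closedBall x).2 ⟨2 * k * r, fun y hy => ?_⟩
  by_contra hy'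
  rw [mem_closedBall, not_le, dist_comm] at hy'
  exact hk.not_ge (hs.natCast_mul_measure_ball_le μ hr (hball.trans interior_subset) hy hy'.le)

theorem Convex.closure_ae_eq (hs : Convex ℝ s) : closure s =ᵐ[μ] s := by
  refine measure_symmDiff_eq_zero_iff.1 (measure_mono_null ?_ (hs.addHaar_frontier μ))
  rw [symmDiff_of_ge subset_closure]
  exact sdiff_subset_sdiff_right interior_subset

end ConvexGeometry

theorem InChat.convex {A : Set Plane} (hA : InChat A) : Convex ℝ A :=
  hA.elim (fun h => h ▸ convex_empty) (·.2.1)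

theorem InChat.measure_ne_top {A : Set Plane} (hA : InChat A) : volume A ≠ ⊤ :=
  hA.elim (fun h => h ▸ measure_empty.trans_ne ENNReal.zero_ne_top) (·.1.measure_lt_top.ne)

/-- $(\hat{\mathcal C}, d)$ is complete: every Cauchy sequence for the
symmetric-difference distance has a limit in $\hat{\mathcal C}$. -/
theorem Chat_complete (A : ℕ → Set Plane) (hA : ∀ n, InChat (A n))
    (hCauchy : ∀ ε : ℝ, 0 < ε → ∃ N : ℕ, ∀ m n : ℕ, N ≤ m → N ≤ n →
      volume (symmDiff (A m) (A n)) < ENNReal.ofReal ε) :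
    ∃ B : Set Plane, InChat B ∧
      Tendsto (fun n => volume (symmDiff (A n) B)) atTop (nhds 0) := by
  obtain ⟨φ, hφ⟩ := exists_tendsto_measure_symmDiff_liminf_comp volume hCauchy
  have hL : Convex ℝ (liminf (A ∘ φ) atTop) := Convex.liminf fun n => (hA (φ n)).convex
  set B := closure (liminf (A ∘ φ) atTop)
  have hB : Tendsto (fun n => volume (A n ∆ B)) atTop (nhds 0) :=
    hφ.congr fun n => measure_congr (ae_eq_set_symmDiff EventuallyEq.rfl (hL.closure_ae_eq _).symm)
  by_cases h₀ : volume B = 0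
  · exact ⟨∅, Or.inl rfl,
      hB.congr fun n => measure_congr (ae_eq_set_symmDiff EventuallyEq.rfl (ae_eq_empty.2 h₀))⟩
  obtain ⟨n, hn⟩ := (hB.eventually (gt_mem_nhds ENNReal.zero_lt_top)).exists
  have hfin : volume B ≠ ⊤ := (measure_ne_top_iff_of_symmDiff hn.ne).1 (hA n).measure_ne_top
  have hbdd := hL.closure.isBounded_of_measure_ne_top volume h₀ hfin
  exact ⟨B, Or.inr ⟨isCompact_of_isClosed_isBounded isClosed_closure hbdd, hL.closure,
    pos_iff_ne_zero.2 h₀⟩, hB⟩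
end
end

section
/- Let A ⊆ ℝ² be a convex measurable set, let x ∈ ℝ² and r > 0 be such that the closed ball B̄(x, r) is contained in A, and let a ∈ A. Then λ(A) ≥ r·‖a − x‖. (A convex set containing a fixed disc and a far-away point contains a triangle of proportionally large area.) -/
/-!
`A` contains the triangle with apex `a` whose base is the diameter of the disc perpendicular
to `a - x`: every point of that triangle is a convex combination of `a` and a point of the disc.
In orthonormal coordinates centred at `x` with first axis along `a - x`, this triangle has base
`2r` and height `‖a - x‖`, hence area `r‖a - x‖`.
-/

open MeasureTheory Set Metric

noncomputable section

theorem Convex.add_smul_sub_add_smul_mem_of_closedBall_subset {E : Type*}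
    [SeminormedAddCommGroup E] [NormedSpace ℝ E] {A : Set E} (hA : Convex ℝ A) {x a v : E}
    {r c t : ℝ} (hball : closedBall x r ⊆ A) (ha : a ∈ A) (hv : ‖v‖ ≤ 1) (hc₀ : 0 ≤ c)
    (hc₁ : c < 1) (ht : |t| ≤ r * (1 - c)) : x + c • (a - x) + t • v ∈ A := by
  have h1c : 0 < 1 - c := sub_pos.2 hc₁
  have hq : x + (t / (1 - c)) • v ∈ A := by
    refine hball (mem_closedBall_iff_norm.2 ?_)
    rw [add_sub_cancel_left, norm_smul, Real.norm_eq_abs, abs_div, abs_of_pos h1c]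
    calc |t| / (1 - c) * ‖v‖ ≤ |t| / (1 - c) * 1 := by gcongr
      _ ≤ r := by rw [mul_one, div_le_iff₀ h1c]; exact ht
  convert hA ha hq hc₀ h1c.le (by ring) using 1
  rw [smul_add, smul_smul, mul_div_cancel₀ _ h1c.ne']
  module

theorem exists_orthonormalBasis_fin_two_apply_zero {E : Type*} [NormedAddCommGroup E]
    [InnerProductSpace ℝ E] (hE : Module.finrank ℝ E = 2) {u : E} (hu : ‖u‖ = 1) :
    ∃ b : OrthonormalBasis (Fin 2) ℝ E, b 0 = u := by
  have := Module.finite_of_finrank_eq_succ hE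
  obtain ⟨b, hb⟩ := Orthonormal.exists_orthonormalBasis_extension_of_card_eq (𝕜 := ℝ)
    (v := fun _ => u) (s := ({0} : Set (Fin 2))) (by simp [hE])
    (orthonormal_subsingleton_iff.2 fun _ => hu)
  exact ⟨b, hb 0 rfl⟩

theorem OrthonormalBasis.measurePreserving_smul_add_smul {E : Type*} [NormedAddCommGroup E]
    [InnerProductSpace ℝ E] [FiniteDimensional ℝ E] [MeasurableSpace E] [BorelSpace E]
    (b : OrthonormalBasis (Fin 2) ℝ E) :
    MeasurePreserving (fun p : ℝ × ℝ => p.1 • b 0 + p.2 • b 1) volume volume := by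
  convert b.measurePreserving_repr_symm.comp ((PiLp.volume_preserving_toLp (Fin 2)).comp
    (volume_preserving_finTwoArrow ℝ).symm) using 1
  ext p
  simp [← b.sum_repr_symm, Fin.sum_univ_two, MeasurableEquiv.finTwoArrow]

/-- The open triangle with vertices `(0, -r)`, `(0, r)` and `(d, 0)`. -/
def isoscelesTriangle (r d : ℝ) : Set (ℝ × ℝ) :=
  regionBetween (fun s => -(r * (1 - s / d))) (fun s => r * (1 - s / d)) (Ioo 0 d)

theorem volume_isoscelesTriangle {r d : ℝ} (hr : 0 ≤ r) (hd : 0 < d) :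
    volume (isoscelesTriangle r d) = ENNReal.ofReal (r * d) := by
  have hint (c : ℝ) : IntegrableOn (fun s => c * (1 - s / d)) (Ioo 0 d) :=
    (by fun_prop : Continuous fun s => c * (1 - s / d)).integrableOn_Icc.mono_set
      Ioo_subset_Icc_self
  rw [isoscelesTriangle, Measure.volume_eq_prod, volume_regionBetween_eq_integral
    (by simpa using (hint r).neg) (hint r) measurableSet_Ioo fun s hs => ?_]
  · rw [← integral_Ioc_eq_integral_Ioo, ← intervalIntegral.integral_of_le hd.le]
    congr 1
    have hwidth (s : ℝ) : r * (1 - s / d) + r * (1 - s / d) = 2 * r - 2 * r / d * s := by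
      field_simp; ring
    simp only [Pi.sub_apply, sub_neg_eq_add, hwidth]
    rw [intervalIntegral.integral_sub intervalIntegrable_const
      ((continuous_const_mul _).intervalIntegrable _ _), intervalIntegral.integral_const,
      intervalIntegral.integral_const_mul, integral_id]
    field_simp
    ring
  · have : 0 ≤ 1 - s / d := by rw [sub_nonneg, div_le_one hd]; exact hs.2.le
    exact neg_le_self (mul_nonneg hr this)

theorem convex_measure_ge_of_ball_subset_general (A : Set Plane)
    (hconv : Convex ℝ A) (x : Plane) (r : ℝ) (hr : 0 < r)
    (hball : closedBall x r ⊆ A) (a : Plane) (ha : a ∈ A) :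
    ENNReal.ofReal (r * ‖a - x‖) ≤ volume A := by
  obtain h0 | hd := (norm_nonneg (a - x)).eq_or_lt
  · simp [← h0]
  set d := ‖a - x‖
  have hu : ‖d⁻¹ • (a - x)‖ = 1 := by
    rw [norm_smul, norm_inv, norm_norm, inv_mul_cancel₀ hd.ne']
  obtain ⟨b, hb⟩ := exists_orthonormalBasis_fin_two_apply_zero finrank_euclideanSpace_fin hu
  set G : ℝ × ℝ → Plane := fun p => x + (p.1 • b 0 + p.2 • b 1)
  have hG : MeasurePreserving G :=
    (measurePreserving_add_left volume x).comp b.measurePreserving_smul_add_smul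
  have hsub : isoscelesTriangle r d ⊆ G ⁻¹' A := by
    rintro ⟨s, t⟩ ⟨⟨hs₀, hsd⟩, ht⟩
    convert hconv.add_smul_sub_add_smul_mem_of_closedBall_subset hball ha
      (b.orthonormal.1 1).le (div_nonneg hs₀.le hd.le) ((div_lt_one hd).2 hsd)
      (abs_le.2 ⟨ht.1.le, ht.2.le⟩) using 2
    simp [G, hb, smul_smul, div_eq_mul_inv, add_assoc]
  let A' := toMeasurable volume A
  calc ENNReal.ofReal (r * d) = volume (isoscelesTriangle r d) :=
        (volume_isoscelesTriangle hr.le hd).symm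
    _ ≤ volume (G ⁻¹' A') := measure_mono (hsub.trans (preimage_mono (subset_toMeasurable _ _)))
    _ = volume A' := hG.measure_preimage (measurableSet_toMeasurable _ _).nullMeasurableSet
    _ = volume A := measure_toMeasurable A

/-- A convex set containing a closed disc of radius `r` and a point `a` has measure at
least `r·‖a − x‖`: it contains an isosceles triangle with base a diameter of the disc
and apex `a`. -/
theorem convex_measure_ge_of_ball_subset (A : Set Plane) (hm : MeasurableSet A)
    (hconv : Convex ℝ A) (x : Plane) (r : ℝ) (hr : 0 < r)
    (hball : closedBall x r ⊆ A) (a : Plane) (ha : a ∈ A) :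
    ENNReal.ofReal (r * ‖a - x‖) ≤ volume A :=
  convex_measure_ge_of_ball_subset_general A hconv x r hr hball a ha
end
end
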